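/- arXiv:2311.08911 — 2 statements merged into one kernel-verified Lean document; each statement's English description precedes it below -/
import Mathlib

section
/- Consider a rooted tree with source node 0 and nodes 1,…,n, encoded by a parent function p : {1,…,n} → {0,1,…,n−1} satisfying p(i) < i for all i, where the edge joining node i to its parent p(i) has nonnegative real cost c_i. For each node i, let A(i) = {i, p(i), p(p(i)),…} \ {0} be the set of nodes on the path from i to the source (including i, excluding the source). Define the characteristic function v on subsets S of {1,…,n} by v(S) = Σ_{j ∈ ∪_{i∈S} A(i)} c_j, the total cost of the edges on the union of the paths connecting the nodes of S to the source, and v(∅)=0. Then for every node i, the Shapley value of i equals φ_i = Σ_{j ∈ A(i)} c_j / |{k ∈ {1,…,n} : j ∈ A(k)}|, i.e. the Shapley cost share of each node coincides with the Claus–Kleitman rule in which the cost of each tree edge is shared equally among all nodes whose path to the source uses that edge. -/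
open Finset

/-!
The tree game is the combination `S ↦ ∑ j, c j * u_{F j} S` of hitting games, where `F j` is the
set of nodes whose path to the source uses edge `j` and `u_T S = 1` iff `S` meets `T`. The Shapley
value is linear, and in `u_T` a player `i ∈ T` is pivotal exactly for the coalitions disjoint
from `T`; the Shapley weights of the subsets of `N \ T` add up to `1 / |T|`, by the recurrence
`w (n + 1) k + w (n + 1) (k + 1) = w n k` for the weights.
-/

/-- The Shapley value of player `i` in the game `(N, v)`:
`φ_i(N,v) = Σ_{S ⊆ N\{i}} [|S|!·(|N|−|S|−1)!/|N|!]·(v(S∪{i}) − v(S))`. -/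
noncomputable def shapley {α : Type*} [DecidableEq α]
    (N : Finset α) (v : Finset α → ℝ) (i : α) : ℝ :=
  ∑ S ∈ (N.erase i).powerset,
    ((S.card.factorial * (N.card - S.card - 1).factorial : ℝ) / (N.card.factorial : ℝ))
      * (v (insert i S) - v S)

noncomputable def shapleyWeight (n k : ℕ) : ℝ :=
  (k.factorial * (n - k - 1).factorial : ℝ) / (n.factorial : ℝ)

lemma shapleyWeight_add_shapleyWeight_succ {n k : ℕ} (h : k < n) :
    shapleyWeight (n + 1) k + shapleyWeight (n + 1) (k + 1) = shapleyWeight n k := by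
  obtain ⟨d, rfl⟩ : ∃ d, n = k + d + 1 := ⟨n - k - 1, by omega⟩
  simp only [shapleyWeight, show k + d + 1 + 1 - k - 1 = d + 1 by omega,
    show k + d + 1 + 1 - (k + 1) - 1 = d by omega, show k + d + 1 - k - 1 = d by omega]
  push_cast [Nat.factorial_succ]
  field_simp
  ring

section

variable {α : Type*}

lemma sum_powerset_shapleyWeight_add_card (M : Finset α) (n : ℕ) :
    ∑ S ∈ M.powerset, shapleyWeight (n + M.card + 1) S.card = 1 / (n + 1) := by
  classical
  induction M using Finset.induction_on generalizing n with
  | empty =>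
    simp [shapleyWeight, Nat.factorial_succ, div_mul_cancel_right₀, Nat.factorial_ne_zero]
  | insert a M ha ih =>
    rw [sum_powerset_insert ha, card_insert_of_notMem ha, ← ih n, ← sum_add_distrib]
    refine sum_congr rfl fun S hS => ?_
    have hSM : S.card ≤ M.card := card_le_card (mem_powerset.mp hS)
    rw [card_insert_of_notMem fun haS => ha (mem_powerset.mp hS haS), ← add_assoc,
      shapleyWeight_add_shapleyWeight_succ (by omega)]

lemma sum_powerset_shapleyWeight {M : Finset α} {n : ℕ} (hM : M.card < n) :
    ∑ S ∈ M.powerset, shapleyWeight n S.card = 1 / ((n - M.card : ℕ) : ℝ) := by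
  obtain ⟨d, rfl⟩ : ∃ d, n = d + M.card + 1 := ⟨n - M.card - 1, by omega⟩
  rw [sum_powerset_shapleyWeight_add_card, show d + M.card + 1 - M.card = d + 1 by omega,
    Nat.cast_succ]

variable [DecidableEq α] {N : Finset α} {i : α}

lemma shapley_eq_sum_shapleyWeight (N : Finset α) (v : Finset α → ℝ) (i : α) :
    shapley N v i =
      ∑ S ∈ (N.erase i).powerset, shapleyWeight N.card S.card * (v (insert i S) - v S) :=
  rfl

lemma shapley_congr {v w : Finset α → ℝ} (hvw : ∀ S ⊆ N, v S = w S) (hi : i ∈ N) :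
    shapley N v i = shapley N w i := by
  refine sum_congr rfl fun S hS => ?_
  have hSN : S ⊆ N := (mem_powerset.mp hS).trans (erase_subset i N)
  rw [hvw S hSN, hvw _ (insert_subset hi hSN)]

lemma shapley_sum {ι : Type*} (s : Finset ι) (v : ι → Finset α → ℝ) :
    shapley N (fun S => ∑ j ∈ s, v j S) i = ∑ j ∈ s, shapley N (v j) i := by
  simp only [shapley, ← sum_sub_distrib, mul_sum]
  exact sum_comm

lemma shapley_const_mul (c : ℝ) (v : Finset α → ℝ) :
    shapley N (fun S => c * v S) i = c * shapley N v i := by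
  simp only [shapley, mul_sum, ← mul_sub]
  exact sum_congr rfl fun _ _ => by ring

def hittingGame (T S : Finset α) : ℝ :=
  if Disjoint S T then 0 else 1

lemma shapley_hittingGame {T : Finset α} (hT : T ⊆ N) :
    shapley N (hittingGame T) i = if i ∈ T then 1 / (T.card : ℝ) else 0 := by
  rw [shapley_eq_sum_shapleyWeight]
  split_ifs with hiT
  · have hmarginal : ∀ S, hittingGame T (insert i S) - hittingGame T S =
        if Disjoint S T then 1 else 0 := by
      intro S
      by_cases hST : Disjoint S T <;> simp [hittingGame, hiT, hST]
    have hfilter : (N.erase i).powerset.filter (Disjoint · T) = (N \ T).powerset := by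
      ext S
      simp only [mem_filter, mem_powerset, subset_sdiff, subset_erase]
      exact ⟨fun ⟨⟨hSN, _⟩, hST⟩ => ⟨hSN, hST⟩,
        fun ⟨hSN, hST⟩ => ⟨⟨hSN, fun hiS => disjoint_left.mp hST hiS hiT⟩, hST⟩⟩
    simp only [hmarginal, mul_ite, mul_one, mul_zero]
    rw [← sum_filter, hfilter, sum_powerset_shapleyWeight, card_sdiff_of_subset hT,
      Nat.sub_sub_self (card_le_card hT)]
    exact card_lt_card (sdiff_ssubset hT ⟨i, hiT⟩)
  · refine sum_eq_zero fun S _ => ?_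
    simp [hittingGame, disjoint_insert_left, hiT]

end

lemma sum_biUnion_eq_sum_mul_hittingGame {α β : Type*} [DecidableEq α] [DecidableEq β]
    {P : Finset β} {E : Finset α} {A : β → Finset α} (hA : ∀ k ∈ P, A k ⊆ E) (c : α → ℝ)
    {S : Finset β} (hS : S ⊆ P) :
    ∑ j ∈ S.biUnion A, c j = ∑ j ∈ E, c j * hittingGame (P.filter (j ∈ A ·)) S := by
  have hSE : S.biUnion A ⊆ E := biUnion_subset.mpr fun k hk => hA k (hS hk)
  rw [← inter_eq_right.mpr hSE, ← sum_ite_mem]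
  refine sum_congr rfl fun j _ => ?_
  have hhit : j ∈ S.biUnion A ↔ ¬Disjoint S (P.filter (j ∈ A ·)) := by
    simp only [mem_biUnion, not_disjoint_iff, mem_filter]
    exact ⟨fun ⟨k, hkS, hjk⟩ => ⟨k, hkS, hS hkS, hjk⟩, fun ⟨k, hkS, _, hjk⟩ => ⟨k, hkS, hjk⟩⟩
  by_cases hj : j ∈ S.biUnion A <;> simp [hittingGame, hj, hhit.mp, hhit.not_left.mp]

lemma ancestors_subset_Icc {n : ℕ} {p : ℕ → ℕ} (hp : ∀ i ∈ Icc 1 n, p i < i)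
    {A : ℕ → Finset ℕ} (hA0 : A 0 = ∅) (hA : ∀ i ∈ Icc 1 n, A i = insert i (A (p i))) :
    ∀ k ≤ n, A k ⊆ Icc 1 n := by
  intro k
  induction k using Nat.strong_induction_on with
  | _ k ih =>
    intro hkn
    rcases Nat.eq_zero_or_pos k with rfl | hk0
    · simp [hA0]
    · have hk : k ∈ Icc 1 n := mem_Icc.mpr ⟨hk0, hkn⟩
      rw [hA k hk]
      exact insert_subset hk (ih (p k) (hp k hk) ((hp k hk).le.trans hkn))

theorem shapley_tree_eq_clausKleitman_general (n : ℕ)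
    (p : ℕ → ℕ) (hp : ∀ i ∈ Finset.Icc 1 n, p i < i)
    (c : ℕ → ℝ)
    (A : ℕ → Finset ℕ)
    (hA0 : A 0 = ∅)
    (hA : ∀ i ∈ Finset.Icc 1 n, A i = insert i (A (p i)))
    (v : Finset ℕ → ℝ)
    (hv : ∀ S ⊆ Finset.Icc 1 n, v S = ∑ j ∈ S.biUnion A, c j) :
    ∀ i ∈ Finset.Icc 1 n,
      shapley (Finset.Icc 1 n) v i
        = ∑ j ∈ A i,
            c j / (((Finset.Icc 1 n).filter (fun k => j ∈ A k)).card : ℝ) := by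
  intro i hi
  have hAN : ∀ k ∈ Icc 1 n, A k ⊆ Icc 1 n := fun k hk =>
    ancestors_subset_Icc hp hA0 hA k (mem_Icc.mp hk).2
  calc shapley (Icc 1 n) v i
      = shapley (Icc 1 n)
          (fun S => ∑ j ∈ Icc 1 n, c j * hittingGame ((Icc 1 n).filter (j ∈ A ·)) S) i :=
        shapley_congr
          (fun S hS => (hv S hS).trans (sum_biUnion_eq_sum_mul_hittingGame hAN c hS)) hi
    _ = ∑ j ∈ Icc 1 n, if j ∈ A i then c j / ((Icc 1 n).filter (j ∈ A ·)).card else 0 := by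
        simp only [shapley_sum, shapley_const_mul, shapley_hittingGame (filter_subset _ _),
          mem_filter, hi, true_and, mul_ite, mul_zero, mul_one_div]
    _ = ∑ j ∈ A i, c j / ((Icc 1 n).filter (j ∈ A ·)).card := by
        rw [sum_ite_mem, inter_eq_right.mpr (hAN i hi)]

/-- On a rooted tree with source `0` and nodes `1,…,n`, parent map `p` with
`p i < i`, edge costs `c i ≥ 0` (edge from `i` to `p i`), ancestor sets
`A i = {i, p i, p (p i), …} \ {0}` (characterized by `A 0 = ∅` and
`A i = insert i (A (p i))` for `1 ≤ i ≤ n`), and characteristic function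
`v S = Σ_{j ∈ ⋃_{i∈S} A i} c j` (so that `v ∅ = 0`), the Shapley value of each
node `i` equals `Σ_{j ∈ A i} c j / |{k ∈ {1,…,n} : j ∈ A k}|`: each tree edge's
cost is shared equally among all nodes whose path to the source uses it
(the Claus–Kleitman rule). -/
theorem shapley_tree_eq_clausKleitman (n : ℕ) (hn : 1 ≤ n)
    (p : ℕ → ℕ) (hp : ∀ i ∈ Finset.Icc 1 n, p i < i)
    (c : ℕ → ℝ) (hc : ∀ j ∈ Finset.Icc 1 n, 0 ≤ c j)
    (A : ℕ → Finset ℕ)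
    (hA0 : A 0 = ∅)
    (hA : ∀ i ∈ Finset.Icc 1 n, A i = insert i (A (p i)))
    (v : Finset ℕ → ℝ)
    (hv : ∀ S ⊆ Finset.Icc 1 n, v S = ∑ j ∈ S.biUnion A, c j) :
    ∀ i ∈ Finset.Icc 1 n,
      shapley (Finset.Icc 1 n) v i
        = ∑ j ∈ A i,
            c j / (((Finset.Icc 1 n).filter (fun k => j ∈ A k)).card : ℝ) :=
  shapley_tree_eq_clausKleitman_general n p hp c A hA0 hA v hv
end

section
/- Let V be a finite set of nodes with source s ∈ V, let E be a finite set of edges (unordered pairs of distinct nodes of V) with nonnegative real costs w, and suppose the whole set N = V \ {s} is nonempty and connectable within E. Let v be the connection game given by v(∅)=0 and v(S) = C_E(S) for nonempty S ⊆ N. Then φ_i(N,v) ≥ 0 for every i ∈ N: every node's Shapley cost share in the average marginal cost mechanism is nonnegative (positiveness). -/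
open Finset

/-- The edge set `F` connects every node of `S` to the source `src`:
in the graph with edge set `F`, every node of `S` is reachable from `src`. -/
def Connects {α : Type*} (src : α) (F : Finset (Sym2 α)) (S : Finset α) : Prop :=
  ∀ i ∈ S, (SimpleGraph.fromEdgeSet (↑F : Set (Sym2 α))).Reachable src i

/-- `S` is connectable within the available edge set `E`: some `F ⊆ E`
connects every node of `S` to the source. -/
def Connectable {α : Type*} (src : α) (E : Finset (Sym2 α)) (S : Finset α) : Prop :=
  ∃ F ⊆ E, Connects src F S

/-- The minimum cost `C_E(S)` of connecting `S` to the source `src` using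
edges from `E` with edge costs `w`. -/
noncomputable def connCost {α : Type*} (src : α) (w : Sym2 α → ℝ)
    (E : Finset (Sym2 α)) (S : Finset α) : ℝ :=
  sInf {x : ℝ | ∃ F ⊆ E, Connects src F S ∧ x = ∑ e ∈ F, w e}
/-- The connection game induced by edge set `E` with costs `w`:
`v(∅) = 0` and `v(S) = C_E(S)` for nonempty `S`. -/
noncomputable def connGame {α : Type*} [DecidableEq α] (src : α) (w : Sym2 α → ℝ)
    (E : Finset (Sym2 α)) (S : Finset α) : ℝ :=
  if S = ∅ then 0 else connCost src w E S

/-!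
The connection game is monotone: a connecting edge set for a coalition also connects each of its
subcoalitions, and with nonnegative costs the empty coalition's value `0` is below every cost.
Hence every marginal contribution `v (S ∪ {i}) - v S` is nonnegative, and so is the Shapley value,
a combination of them with nonnegative weights.
-/

theorem shapley_nonneg_of_le_insert {α : Type*} [DecidableEq α] {N : Finset α}
    {v : Finset α → ℝ} {i : α} (hv : ∀ S ⊆ N.erase i, v S ≤ v (insert i S)) :
    0 ≤ shapley N v i :=
  sum_nonneg fun S hS =>
    mul_nonneg (by positivity) (sub_nonneg.mpr (hv S (mem_powerset.mp hS)))

section ConnectionGame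

variable {α : Type*} {src : α} {w : Sym2 α → ℝ} {E : Finset (Sym2 α)} {S T : Finset α}

theorem Connects.mono {F : Finset (Sym2 α)} (hT : Connects src F T) (hST : S ⊆ T) :
    Connects src F S :=
  fun j hj => hT j (hST hj)

theorem Connectable.mono (hT : Connectable src E T) (hST : S ⊆ T) : Connectable src E S :=
  let ⟨F, hFE, hF⟩ := hT
  ⟨F, hFE, hF.mono hST⟩

theorem connCost_nonneg (hw : ∀ e ∈ E, 0 ≤ w e) : 0 ≤ connCost src w E S :=
  Real.sInf_nonneg <| by
    rintro x ⟨F, hFE, -, rfl⟩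
    exact sum_nonneg fun e he => hw e (hFE he)

theorem connCost_mono (hw : ∀ e ∈ E, 0 ≤ w e) (hT : Connectable src E T) (hST : S ⊆ T) :
    connCost src w E S ≤ connCost src w E T := by
  obtain ⟨F, hFE, hF⟩ := hT
  refine csInf_le_csInf ⟨0, ?_⟩ ⟨_, F, hFE, hF, rfl⟩ ?_
  · rintro x ⟨F', hF'E, -, rfl⟩
    exact sum_nonneg fun e he => hw e (hF'E he)
  · rintro x ⟨F', hF'E, hF', rfl⟩
    exact ⟨F', hF'E, hF'.mono hST, rfl⟩

theorem connGame_mono [DecidableEq α] (hw : ∀ e ∈ E, 0 ≤ w e) (hT : Connectable src E T)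
    (hST : S ⊆ T) : connGame src w E S ≤ connGame src w E T := by
  unfold connGame
  rcases S.eq_empty_or_nonempty with rfl | hS
  · rw [if_pos rfl]
    split_ifs
    exacts [le_rfl, connCost_nonneg hw]
  · rw [if_neg hS.ne_empty, if_neg (hS.mono hST).ne_empty]
    exact connCost_mono hw hT hST

end ConnectionGame

theorem amcm_positive_general (α : Type*) [DecidableEq α]
    (V : Finset α) (src : α)
    (E : Finset (Sym2 α))
    (w : Sym2 α → ℝ) (hw : ∀ e ∈ E, 0 ≤ w e)
    (hconn : Connectable src E (V \ {src})) :
    ∀ i ∈ V \ {src}, 0 ≤ shapley (V \ {src}) (connGame src w E) i := by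
  intro i hi
  refine shapley_nonneg_of_le_insert fun S hS => ?_
  have hiS : insert i S ⊆ V \ {src} := insert_subset hi (hS.trans (erase_subset _ _))
  exact connGame_mono hw (hconn.mono hiS) (subset_insert i S)

/-- Positiveness of the average marginal cost mechanism: if `N = V \ {s}` is
nonempty and connectable within `E`, every node's Shapley cost share in the
connection game is nonnegative. -/
theorem amcm_positive (α : Type*) [DecidableEq α]
    (V : Finset α) (src : α) (hsrc : src ∈ V)
    (E : Finset (Sym2 α)) (hE : ∀ e ∈ E, ¬ e.IsDiag ∧ ∀ x ∈ e, x ∈ V)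
    (w : Sym2 α → ℝ) (hw : ∀ e ∈ E, 0 ≤ w e)
    (hN : (V \ {src}).Nonempty)
    (hconn : Connectable src E (V \ {src})) :
    ∀ i ∈ V \ {src}, 0 ≤ shapley (V \ {src}) (connGame src w E) i :=
  amcm_positive_general α V src E w hw hconn
end
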